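/- Let φ : (A, d_A) → (B, d_B) be a morphism of finite-type CDGAs over a field k. Suppose φ^0 : A^0 → B^0 is an isomorphism and φ^1 : A^1 → B^1 is injective. Then the induced map MC(A) → MC(B), a ↦ φ(a), is injective, and for every a ∈ MC(A) and every s ≥ 0, if dim_k H^1(A, δ_a) ≥ s then dim_k H^1(B, δ_{φ(a)}) ≥ s; that is, φ sends R^1_s(A) into R^1_s(B). -/

import Mathlib

open scoped TensorProduct DirectSum

/-- A commutative differential graded algebra (CDGA) over a field `k`:
an ℕ-graded, associative, unital, graded-commutative `k`-algebra together with a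
degree `+1` differential satisfying `d ∘ d = 0` and the graded Leibniz rule. -/
structure CDGA (k : Type) [Field k] : Type 1 where
  carrier : Type
  [ringCarrier : Ring carrier]
  [algebraCarrier : Algebra k carrier]
  grading : ℕ → Submodule k carrier
  [gradedAlgebra : GradedAlgebra grading]
  gcomm : ∀ ⦃i j : ℕ⦄ ⦃u v : carrier⦄, u ∈ grading i → v ∈ grading j →
    u * v = ((-1 : k) ^ (i * j)) • (v * u)
  d : carrier →ₗ[k] carrier
  d_mem : ∀ ⦃i : ℕ⦄ ⦃u : carrier⦄, u ∈ grading i → d u ∈ grading (i + 1)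
  d_sq : ∀ u : carrier, d (d u) = 0
  leibniz : ∀ ⦃i j : ℕ⦄ ⦃u v : carrier⦄, u ∈ grading i → v ∈ grading j →
    d (u * v) = d u * v + ((-1 : k) ^ i) • (u * d v)

attribute [instance] CDGA.ringCarrier CDGA.algebraCarrier CDGA.gradedAlgebra

namespace CDGA

variable {k : Type} [Field k]

/-- A CDGA is of finite type if each graded piece is finite-dimensional. -/
def FiniteType (A : CDGA k) : Prop := ∀ i : ℕ, FiniteDimensional k (A.grading i)

/-- A CDGA is connected if its degree-0 part is the span of the unit. -/
def Connected (A : CDGA k) : Prop :=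
  ∀ u ∈ A.grading 0, ∃ c : k, u = algebraMap k A.carrier c

/-- The Maurer–Cartan condition: `a·a + d a = 0` for `a ∈ A¹`. -/
def IsMC (A : CDGA k) (a : A.grading 1) : Prop :=
  (a : A.carrier) * (a : A.carrier) + A.d (a : A.carrier) = 0

/-- The differential `δ_a(u) = a·u + d u` of the Aomoto complex, in degree `q`. -/
noncomputable def delta (A : CDGA k) (a : A.grading 1) (q : ℕ) :
    A.grading q →ₗ[k] A.grading (q + 1) where
  toFun u := ⟨(a : A.carrier) * (u : A.carrier) + A.d (u : A.carrier), by
    have h1 : (a : A.carrier) * (u : A.carrier) ∈ A.grading (1 + q) :=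
      SetLike.mul_mem_graded a.2 u.2
    rw [add_comm] at h1
    exact Submodule.add_mem _ h1 (A.d_mem u.2)⟩
  map_add' u v := by
    ext
    simp only [Submodule.coe_add, mul_add, map_add]
    abel
  map_smul' c u := by
    ext
    simp only [SetLike.val_smul, RingHom.id_apply, Submodule.coe_smul, map_smul,
      mul_smul_comm, smul_add]

/-- Each graded piece is an additive group (instance added for the port). -/
instance gradingAddCommGroup (A : CDGA k) (q : ℕ) : AddCommGroup (A.grading q) :=
  Submodule.addCommGroup (A.grading q)

/-- Cocycles of the Aomoto complex in degree `q`. -/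
noncomputable def cocycles (A : CDGA k) (a : A.grading 1) (q : ℕ) :
    Submodule k (A.grading q) :=
  LinearMap.ker (A.delta a q)

/-- Coboundaries of the Aomoto complex in degree `q`. -/
noncomputable def coboundaries (A : CDGA k) (a : A.grading 1) : (q : ℕ) → Submodule k (A.grading q)
  | 0 => ⊥
  | (q + 1) => LinearMap.range (A.delta a q)

/-- Cohomology of the Aomoto complex `H^q(A, δ_a)`. -/
abbrev cohomology (A : CDGA k) (a : A.grading 1) (q : ℕ) :=
  A.cocycles a q ⧸ (A.coboundaries a q).comap (A.cocycles a q).subtype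

/-- `dim_k H^q(A, δ_a)`. -/
noncomputable def hdim (A : CDGA k) (a : A.grading 1) (q : ℕ) : ℕ :=
  Module.finrank k (A.cohomology a q)

/-- The resonance variety `R^q_s(A) = {a ∈ MC(A) : dim_k H^q(A, δ_a) ≥ s}`. -/
noncomputable def Res (A : CDGA k) (q s : ℕ) : Set (A.grading 1) :=
  {a | A.IsMC a ∧ s ≤ A.hdim a q}

/-- A morphism of CDGAs: a `k`-algebra map preserving degrees and differentials. -/
structure Hom (A B : CDGA k) where
  toAlgHom : A.carrier →ₐ[k] B.carrier
  map_mem : ∀ ⦃i : ℕ⦄ ⦃u : A.carrier⦄, u ∈ A.grading i → toAlgHom u ∈ B.grading i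
  map_d : ∀ u : A.carrier, toAlgHom (A.d u) = B.d (toAlgHom u)

/-- The restriction `φ^i : A^i → B^i` of a CDGA morphism. -/
def Hom.res {A B : CDGA k} (φ : Hom A B) (i : ℕ) : A.grading i →ₗ[k] B.grading i where
  toFun u := ⟨φ.toAlgHom u, φ.map_mem u.2⟩
  map_add' u v := by ext; simp
  map_smul' c u := by ext; simp

/-- Composition of CDGA morphisms. -/
def Hom.comp {A B C : CDGA k} (ψ : Hom B C) (φ : Hom A B) : Hom A C where
  toAlgHom := ψ.toAlgHom.comp φ.toAlgHom
  map_mem := fun _ _ hu => ψ.map_mem (φ.map_mem hu)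
  map_d := fun u => by
    simp only [AlgHom.comp_apply]
    rw [φ.map_d, ψ.map_d]

end CDGA

namespace CDGA

variable {k : Type} [Field k] {A B : CDGA k}

namespace Hom

theorem res_delta (φ : Hom A B) (a : A.grading 1) (q : ℕ) (u : A.grading q) :
    φ.res (q + 1) (A.delta a q u) = B.delta (φ.res 1 a) q (φ.res q u) := by
  apply Subtype.ext
  change φ.toAlgHom ((a : A.carrier) * u + A.d u) =
    φ.toAlgHom a * φ.toAlgHom u + B.d (φ.toAlgHom u)
  rw [map_add, map_mul, φ.map_d]

theorem isMC_res (φ : Hom A B) {a : A.grading 1} (ha : A.IsMC a) : B.IsMC (φ.res 1 a) := by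
  change φ.toAlgHom a * φ.toAlgHom a + B.d (φ.toAlgHom a) = 0
  rw [← map_mul, ← φ.map_d, ← map_add, ha, map_zero]

theorem res_mem_cocycles (φ : Hom A B) (a : A.grading 1) {q : ℕ} {u : A.grading q}
    (hu : u ∈ A.cocycles a q) : φ.res q u ∈ B.cocycles (φ.res 1 a) q := by
  change B.delta (φ.res 1 a) q (φ.res q u) = 0
  rw [← res_delta, LinearMap.mem_ker.mp hu, map_zero]

theorem res_mem_coboundaries (φ : Hom A B) (a : A.grading 1) :
    ∀ {q : ℕ} {u : A.grading q}, u ∈ A.coboundaries a q →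
      φ.res q u ∈ B.coboundaries (φ.res 1 a) q
  | 0, _, hu => by
    rw [coboundaries, Submodule.mem_bot] at hu ⊢
    rw [hu, map_zero]
  | q + 1, _, ⟨v, rfl⟩ => ⟨φ.res q v, (res_delta φ a q v).symm⟩

noncomputable def cohomologyMap (φ : Hom A B) (a : A.grading 1) (q : ℕ) :
    A.cohomology a q →ₗ[k] B.cohomology (φ.res 1 a) q :=
  Submodule.mapQ _ _ ((φ.res q).restrict fun _ => φ.res_mem_cocycles a)
    fun _ hu => φ.res_mem_coboundaries a hu

/-- A class `[u]` killed by `φ` has `φ(u) = δ_{φ(a)} w`; lifting `w = φ(v)` along the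
surjective `φ^q` gives `φ(δ_a v) = φ(u)`, hence `u = δ_a v` by injectivity of `φ^{q+1}`. -/
theorem cohomologyMap_injective (φ : Hom A B) (a : A.grading 1) {q : ℕ}
    (hsurj : Function.Surjective (φ.res q)) (hinj : Function.Injective (φ.res (q + 1))) :
    Function.Injective (φ.cohomologyMap a (q + 1)) := by
  rw [← LinearMap.ker_eq_bot]
  refine Submodule.ker_liftQ_eq_bot _ _ _ fun u hu => ?_
  obtain ⟨w, hw⟩ : ∃ w, B.delta (φ.res 1 a) q w = φ.res (q + 1) u :=
    (Submodule.Quotient.mk_eq_zero _).mp hu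
  obtain ⟨v, rfl⟩ := hsurj w
  exact ⟨v, hinj (by rw [res_delta, hw]; rfl)⟩

theorem hdim_le_hdim (φ : Hom A B) (a : A.grading 1) {q : ℕ}
    [FiniteDimensional k (B.grading (q + 1))]
    (hsurj : Function.Surjective (φ.res q)) (hinj : Function.Injective (φ.res (q + 1))) :
    A.hdim a (q + 1) ≤ B.hdim (φ.res 1 a) (q + 1) :=
  LinearMap.finrank_le_finrank_of_injective (φ.cohomologyMap_injective a hsurj hinj)

end Hom

end CDGA

theorem statement7_general {k : Type} [Field k] (A B : CDGA k)
    (hBf : B.FiniteType) (φ : CDGA.Hom A B)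
    (h0 : Function.Bijective (φ.res 0)) (h1 : Function.Injective (φ.res 1)) :
    Set.InjOn (φ.res 1) {a : A.grading 1 | A.IsMC a} ∧
    (∀ a : A.grading 1, A.IsMC a → ∀ s : ℕ,
      s ≤ A.hdim a 1 → s ≤ B.hdim (φ.res 1 a) 1) ∧
    (∀ s : ℕ, (φ.res 1) '' (A.Res 1 s) ⊆ B.Res 1 s) := by
  have := hBf 1
  have hdim_le (a : A.grading 1) : A.hdim a 1 ≤ B.hdim (φ.res 1 a) 1 :=
    φ.hdim_le_hdim a h0.surjective h1
  refine ⟨h1.injOn, fun a _ s hs => hs.trans (hdim_le a), ?_⟩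
  rintro s _ ⟨a, ⟨ha, hs⟩, rfl⟩
  exact ⟨φ.isMC_res ha, hs.trans (hdim_le a)⟩

/-- Let `φ : A → B` be a morphism of finite-type CDGAs over `k`
with `φ^0` an isomorphism and `φ^1` injective.  Then the induced map
`MC(A) → MC(B)` is injective, and for every `a ∈ MC(A)` and `s ≥ 0`, if
`dim_k H^1(A, δ_a) ≥ s` then `dim_k H^1(B, δ_{φ(a)}) ≥ s`; that is, `φ` sends
`R^1_s(A)` into `R^1_s(B)`. -/
theorem statement7 {k : Type} [Field k] (A B : CDGA k)
    (hAf : A.FiniteType) (hBf : B.FiniteType) (φ : CDGA.Hom A B)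
    (h0 : Function.Bijective (φ.res 0)) (h1 : Function.Injective (φ.res 1)) :
    Set.InjOn (φ.res 1) {a : A.grading 1 | A.IsMC a} ∧
    (∀ a : A.grading 1, A.IsMC a → ∀ s : ℕ,
      s ≤ A.hdim a 1 → s ≤ B.hdim (φ.res 1 a) 1) ∧
    (∀ s : ℕ, (φ.res 1) '' (A.Res 1 s) ⊆ B.Res 1 s) :=
  statement7_general A B hBf φ h0 h1
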